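/- arXiv:2303.09206 — 2 statements merged into one kernel-verified Lean document; each statement's English description precedes it below -/
import Mathlib

section
/- For x > 0 and 0 < s < 1, if G > ((1-s)/s)^(1-s) then log(1+x) < G·x^s. -/
open Real

theorem log_lt_G_rpow (x s G : ℝ) (hx : 0 < x) (hs0 : 0 < s) (hs1 : s < 1)
    (hG : ((1 - s) / s) ^ (1 - s) < G) :
    Real.log (1 + x) < G * x ^ s := by
  have hs1' : 0 < 1 - s := by linarith
  set a : ℝ := (1 - s) / s with ha_def
  have ha : 0 < a := div_pos hs1' hs0
  set C : ℝ := a ^ (1 - s) with hC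
  have hCpos : 0 < C := rpow_pos_of_pos ha _
  -- key AM-GM inequality
  have key : ∀ t : ℝ, 0 ≤ t → t ^ (1 - s) ≤ C * s * (1 + t) := by
    intro t ht
    have hμ : (0:ℝ) ≤ C * s / (1 - s) * t := by positivity
    have hamgm := Real.geom_mean_le_arith_mean2_weighted hs1'.le hs0.le hμ hCpos.le
      (by ring : (1 - s) + s = 1)
    have hmu : C * s / (1 - s) = a ^ (-s) := by
      have h1 : s / (1 - s) = a⁻¹ := by
        rw [ha_def, inv_div]
      have : C * s / (1 - s) = C * (s / (1 - s)) := by ring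
      rw [this, h1, hC, ← Real.rpow_neg_one a, ← Real.rpow_add ha]
      congr 1; ring
    have hcoef : (C * s / (1 - s)) ^ (1 - s) * C ^ s = 1 := by
      rw [hmu, hC, ← Real.rpow_mul ha.le, ← Real.rpow_mul ha.le, ← Real.rpow_add ha]
      rw [show -s * (1 - s) + (1 - s) * s = 0 by ring, Real.rpow_zero]
    calc t ^ (1 - s) = ((C * s / (1 - s)) ^ (1 - s) * C ^ s) * t ^ (1 - s) := by
          rw [hcoef, one_mul]
      _ = (C * s / (1 - s) * t) ^ (1 - s) * C ^ s := by
          rw [Real.mul_rpow (by positivity) ht]; ring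
      _ ≤ (1 - s) * (C * s / (1 - s) * t) + s * C := hamgm
      _ = C * s * (1 + t) := by field_simp; ring
  -- deriv nonneg fact
  have hderpos : ∀ t : ℝ, 0 < t → (1 + t)⁻¹ ≤ C * (s * t ^ (s - 1)) := by
    intro t ht
    have hk := key t ht.le
    have hts : 0 < t ^ (s - 1) := rpow_pos_of_pos ht _
    have hts' : 0 < t ^ (1 - s) := rpow_pos_of_pos ht _
    have hprod : t ^ (s - 1) * t ^ (1 - s) = 1 := by
      rw [← Real.rpow_add ht]; norm_num
    rw [inv_le_iff_one_le_mul₀ (by positivity)]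
    calc (1:ℝ) = t ^ (s - 1) * t ^ (1 - s) := hprod.symm
      _ ≤ t ^ (s - 1) * (C * s * (1 + t)) := by
          exact mul_le_mul_of_nonneg_left hk hts.le
      _ = C * (s * t ^ (s - 1)) * (1 + t) := by ring
  -- monotonicity of f t = C * t^s - log(1+t) on [0, x]
  set f : ℝ → ℝ := fun t => C * t ^ s - Real.log (1 + t) with hf
  have hcont : ContinuousOn f (Set.Icc 0 x) := by
    apply ContinuousOn.sub
    · exact (Real.continuous_rpow_const hs0.le).continuousOn.const_smul C
    · intro t ht
      have h1t : (0:ℝ) < 1 + t := by have := ht.1; linarith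
      exact ((Real.continuousAt_log h1t.ne').comp
        ((continuousAt_const.add continuousAt_id))).continuousWithinAt
  have hder : ∀ t ∈ Set.Ioo (0:ℝ) x,
      HasDerivAt f (C * (s * t ^ (s - 1)) - (1 + t)⁻¹) t := by
    intro t ht
    have h1 : HasDerivAt (fun t : ℝ => t ^ s) (s * t ^ (s - 1)) t :=
      Real.hasDerivAt_rpow_const (Or.inl ht.1.ne')
    have h1t : (0:ℝ) < 1 + t := by linarith [ht.1]
    have h2 : HasDerivAt (fun t : ℝ => Real.log (1 + t)) ((1 + t)⁻¹) t := by
      have hb : HasDerivAt (fun t : ℝ => 1 + t) 1 t := (hasDerivAt_id t).const_add 1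
      simpa using hb.log h1t.ne'
    exact (h1.const_mul C).sub h2
  have hmono : MonotoneOn f (Set.Icc 0 x) := by
    apply monotoneOn_of_deriv_nonneg (convex_Icc 0 x) hcont
    · rw [interior_Icc]
      intro t ht
      exact ((hder t ht).differentiableAt).differentiableWithinAt
    · rw [interior_Icc]
      intro t ht
      rw [(hder t ht).deriv]
      have := hderpos t ht.1
      linarith
  have h0x : f 0 ≤ f x :=
    hmono (Set.left_mem_Icc.mpr hx.le) (Set.right_mem_Icc.mpr hx.le) hx.le
  have hf0 : f 0 = 0 := by
    simp [hf, Real.zero_rpow hs0.ne']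
  have hle : Real.log (1 + x) ≤ C * x ^ s := by
    have := h0x
    rw [hf0] at this
    simp only [hf] at this
    linarith
  have hlt : C * x ^ s < G * x ^ s :=
    mul_lt_mul_of_pos_right hG (rpow_pos_of_pos hx s)
  linarith
end

section
/- Let α̂ = (Φ^⊤Φ + Nσ²P^{-1})^{-1}Φ^⊤Y where Y = Φᾱ + e with E[e] = 0, Cov(e) = σ²I_N, and P^{-1} symmetric positive definite. If the residual term is zero, then the derivative at γ = 0⁺ of the mean squared error M(γ) = E‖α̂ − ᾱ‖² with P^{-1} = γΣ_α^{-1}/σ², namely −2 Tr((Φ^⊤Φ)^{-1} Σ̃_α^{-1} (Φ^⊤Φ)^{-1} · σ²), is strictly negative; consequently M(γ) < M(0) for all sufficiently small γ > 0. -/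
open Matrix Filter

attribute [local instance] Matrix.linftyOpNormedRing Matrix.linftyOpNormedAlgebra

section aux
variable {n : Type*} [Fintype n] [DecidableEq n]

lemma myPosDef_smul {M : Matrix n n ℝ} (hM : M.PosDef) {c : ℝ} (hc : 0 < c) :
    (c • M).PosDef := by
  refine Matrix.PosDef.of_dotProduct_mulVec_pos ?_ (fun x hx => ?_)
  · show (c • M)ᴴ = _
    rw [conjTranspose_smul, hM.isHermitian.eq]
    simp
  · rw [smul_mulVec, dotProduct_smul, smul_eq_mul]
    exact mul_pos hc (hM.dotProduct_mulVec_pos hx)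

lemma myPosDef_conj {B C : Matrix n n ℝ} (hB : B.PosDef) (hC : IsUnit C)
    (hCs : Cᴴ = C) : (C * B * C).PosDef := by
  have hCd : IsUnit C.det := (Matrix.isUnit_iff_isUnit_det C).mp hC
  refine Matrix.PosDef.of_dotProduct_mulVec_pos ?_ (fun x hx => ?_)
  · show (C * B * C)ᴴ = _
    rw [conjTranspose_mul, conjTranspose_mul, hCs, hB.isHermitian.eq, mul_assoc]
  · have hCx : C *ᵥ x ≠ 0 := by
      intro h
      apply hx
      have : (C⁻¹ * C) *ᵥ x = 0 := by rw [← Matrix.mulVec_mulVec, h, Matrix.mulVec_zero]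
      rwa [Matrix.nonsing_inv_mul C hCd, Matrix.one_mulVec] at this
    have hCt : Cᵀ = C := by simpa using hCs
    have key : star x ⬝ᵥ (C * B * C) *ᵥ x = star (C *ᵥ x) ⬝ᵥ B *ᵥ (C *ᵥ x) := by
      rw [← Matrix.mulVec_mulVec, ← Matrix.mulVec_mulVec]
      rw [Matrix.dotProduct_mulVec (star x) C]
      congr 1
      have h1 : x ᵥ* C = C *ᵥ x := by
        nth_rewrite 1 [← hCt]
        exact Matrix.vecMul_transpose C x
      simpa using h1
    rw [key]
    exact hB.dotProduct_mulVec_pos hCx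

lemma myPosDef_trace_pos {M : Matrix n n ℝ} [Nonempty n] (hM : M.PosDef) :
    0 < M.trace := by
  rw [Matrix.trace]
  refine Finset.sum_pos (fun i _ => ?_) Finset.univ_nonempty
  have := hM.dotProduct_mulVec_pos (x := Pi.single i 1) (fun h => by
    have h2 := congrFun h i
    rw [Pi.single_eq_same] at h2
    exact one_ne_zero h2)
  simpa [Matrix.diag, dotProduct, Matrix.mulVec, Finset.sum_eq_single i,
    Pi.single_apply] using this

end aux

set_option maxHeartbeats 1000000 in
theorem regularization_decreases_mse (N E : ℕ) (hN : 0 < N) [NeZero E]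
    (Φ : Matrix (Fin N) (Fin E) ℝ) (hΦ : (Φᵀ * Φ).PosDef)
    (Sa : Matrix (Fin E) (Fin E) ℝ) (hSa : Sa.PosDef)
    (σ : ℝ) (hσ : 0 < σ) (αbar : Fin E → ℝ) :
    derivWithin
        (fun γ : ℝ =>
          Matrix.trace ((γ • ((N : ℝ)⁻¹ • Sa)⁻¹ + Φᵀ * Φ)⁻¹ *
            (σ ^ 2 • (Φᵀ * Φ) +
              γ ^ 2 • (((N : ℝ)⁻¹ • Sa)⁻¹ * Matrix.vecMulVec αbar αbar *
                ((N : ℝ)⁻¹ • Sa)⁻¹)) *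
            (γ • ((N : ℝ)⁻¹ • Sa)⁻¹ + Φᵀ * Φ)⁻¹))
        (Set.Ici 0) 0
      = -2 * σ ^ 2 *
          Matrix.trace ((Φᵀ * Φ)⁻¹ * ((N : ℝ)⁻¹ • Sa)⁻¹ * (Φᵀ * Φ)⁻¹) ∧
    -2 * σ ^ 2 * Matrix.trace ((Φᵀ * Φ)⁻¹ * ((N : ℝ)⁻¹ • Sa)⁻¹ * (Φᵀ * Φ)⁻¹) < 0 ∧
    ∃ ε > 0, ∀ γ : ℝ, 0 < γ → γ < ε →
      Matrix.trace ((γ • ((N : ℝ)⁻¹ • Sa)⁻¹ + Φᵀ * Φ)⁻¹ *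
          (σ ^ 2 • (Φᵀ * Φ) +
            γ ^ 2 • (((N : ℝ)⁻¹ • Sa)⁻¹ * Matrix.vecMulVec αbar αbar *
              ((N : ℝ)⁻¹ • Sa)⁻¹)) *
          (γ • ((N : ℝ)⁻¹ • Sa)⁻¹ + Φᵀ * Φ)⁻¹)
        < Matrix.trace ((Φᵀ * Φ)⁻¹ * (σ ^ 2 • (Φᵀ * Φ)) * (Φᵀ * Φ)⁻¹) := by
  have hNE : Nonempty (Fin E) := ⟨⟨0, Nat.pos_of_ne_zero (NeZero.ne E)⟩⟩
  set A := Φᵀ * Φ with hAdef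
  set B := ((N : ℝ)⁻¹ • Sa)⁻¹ with hBdef
  set Cm := B * Matrix.vecMulVec αbar αbar * B with hCdef
  have hNc : (0:ℝ) < (N : ℝ)⁻¹ := by
    have : (0:ℝ) < (N : ℝ) := by exact_mod_cast hN
    exact inv_pos.mpr this
  have hB : B.PosDef := (myPosDef_smul hSa hNc).inv
  have hAu : IsUnit A := hΦ.isUnit
  have hAd : IsUnit A.det := (Matrix.isUnit_iff_isUnit_det A).mp hAu
  have e1 : A⁻¹ * A = 1 := Matrix.nonsing_inv_mul A hAd
  have e2 : A * A⁻¹ = 1 := Matrix.mul_nonsing_inv A hAd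
  set u := hAu.unit with hudef
  have hu : (↑u : Matrix (Fin E) (Fin E) ℝ) = A := hAu.unit_spec
  have huinv : (↑u⁻¹ : Matrix (Fin E) (Fin E) ℝ) = A⁻¹ := by
    rw [Matrix.coe_units_inv, hu]
  -- derivative of the affine map
  have hlin : HasDerivAt (fun γ : ℝ => γ • B + A) B 0 := by
    have h := ((hasDerivAt_id (0:ℝ)).smul_const B).add_const A
    simp only [id, one_smul] at h
    exact h
  have h0 : (fun γ : ℝ => γ • B + A) 0 = ↑u := by simp [hu]
  have hg : HasDerivAt (fun γ : ℝ => Ring.inverse (γ • B + A)) (-(A⁻¹ * B * A⁻¹)) 0 := by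
    have hg0 : HasFDerivAt Ring.inverse
        (-(ContinuousLinearMap.mulLeftRight ℝ (Matrix (Fin E) (Fin E) ℝ) ↑u⁻¹) ↑u⁻¹)
        ((fun γ : ℝ => γ • B + A) 0) := by
      rw [h0]; exact hasFDerivAt_ringInverse (𝕜 := ℝ) u
    have hcomp := hg0.comp_hasDerivAt 0 hlin
    simp only [huinv] at hcomp
    exact hcomp
  have hmid : HasDerivAt (fun γ : ℝ => σ ^ 2 • A + γ ^ 2 • Cm) (0 : Matrix (Fin E) (Fin E) ℝ) 0 := by
    have := ((hasDerivAt_pow 2 (0:ℝ)).smul_const Cm).const_add (σ ^ 2 • A)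
    simp [-hasDerivAt_const_add_iff] at this
    exact this
  have hq := (hg.mul hmid).mul hg
  have hRi : Ring.inverse ((0:ℝ) • B + A) = A⁻¹ := by
    rw [← Matrix.nonsing_inv_eq_ringInverse]
    simp
  -- trace as continuous linear map
  set L := LinearMap.toContinuousLinearMap
      (Matrix.traceLinearMap (Fin E) ℝ ℝ) with hLdef
  have htr := L.hasFDerivAt.comp_hasDerivAt 0 hq
  have hLapp : ∀ M : Matrix (Fin E) (Fin E) ℝ, L M = M.trace := fun M => rfl
  set Dval : ℝ := -2 * σ ^ 2 * Matrix.trace (A⁻¹ * B * A⁻¹) with hDdef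
  have hF : HasDerivAt (fun γ : ℝ =>
      Matrix.trace ((γ • B + A)⁻¹ * (σ ^ 2 • A + γ ^ 2 • Cm) * (γ • B + A)⁻¹)) Dval 0 := by
    have hfun : (fun γ : ℝ =>
        Matrix.trace ((γ • B + A)⁻¹ * (σ ^ 2 • A + γ ^ 2 • Cm) * (γ • B + A)⁻¹)) =
        fun γ : ℝ => L (Ring.inverse (γ • B + A) * (σ ^ 2 • A + γ ^ 2 • Cm) *
          Ring.inverse (γ • B + A)) := by
      funext γ
      rw [hLapp, Matrix.nonsing_inv_eq_ringInverse]
    rw [hfun]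
    refine htr.congr_deriv ?_
    symm
    refine Eq.trans ?_ (hLapp _).symm
    simp only [Pi.mul_apply, hRi]
    have hX1 : A⁻¹ * B * A⁻¹ * (σ ^ 2 • A) * A⁻¹ = σ ^ 2 • (A⁻¹ * B * A⁻¹) := by
      rw [Matrix.mul_smul, Matrix.smul_mul]
      congr 1
      rw [mul_assoc (A⁻¹ * B * A⁻¹) A A⁻¹, e2, mul_one]
    have hX2 : A⁻¹ * (σ ^ 2 • A) * -(A⁻¹ * B * A⁻¹) = -(σ ^ 2 • (A⁻¹ * B * A⁻¹)) := by
      rw [mul_neg]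
      congr 1
      rw [Matrix.mul_smul, Matrix.smul_mul]
      congr 1
      rw [e1, one_mul]
    simp only [ne_eq, OfNat.ofNat_ne_zero, not_false_eq_true, zero_pow, zero_smul,
      add_zero, mul_zero]
    rw [neg_mul, neg_mul, hX2, Matrix.trace_add, Matrix.trace_neg, Matrix.trace_neg,
      hX1, Matrix.trace_smul, hDdef]
    simp only [smul_eq_mul]
    ring
  have hf0 : Matrix.trace (((0:ℝ) • B + A)⁻¹ * (σ ^ 2 • A + (0:ℝ) ^ 2 • Cm) * ((0:ℝ) • B + A)⁻¹)
      = Matrix.trace (A⁻¹ * (σ ^ 2 • A) * A⁻¹) := by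
    simp
  have hDneg : Dval < 0 := by
    have htp : 0 < Matrix.trace (A⁻¹ * B * A⁻¹) := by
      have hAinv : A⁻¹.PosDef := hΦ.inv
      have hAinvs : (A⁻¹)ᴴ = A⁻¹ := hAinv.isHermitian.eq
      have hAinvu : IsUnit A⁻¹ := by
        rw [Matrix.isUnit_iff_isUnit_det]
        exact hAinv.det_pos.ne'.isUnit
      exact myPosDef_trace_pos (myPosDef_conj hB hAinvu hAinvs)
    have hσ2 : 0 < σ ^ 2 := pow_pos hσ 2
    rw [hDdef]
    nlinarith
  refine ⟨hF.hasDerivWithinAt.derivWithin (uniqueDiffOn_Ici 0 0 Set.self_mem_Ici), hDneg, ?_⟩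
  -- part 3
  have hslope : Filter.Tendsto (slope (fun γ : ℝ =>
      Matrix.trace ((γ • B + A)⁻¹ * (σ ^ 2 • A + γ ^ 2 • Cm) * (γ • B + A)⁻¹)) 0)
      (nhdsWithin 0 {(0:ℝ)}ᶜ) (nhds Dval) := hasDerivAt_iff_tendsto_slope.mp hF
  have hev : ∀ᶠ γ in nhdsWithin 0 (Set.Ioi (0:ℝ)), slope (fun γ : ℝ =>
      Matrix.trace ((γ • B + A)⁻¹ * (σ ^ 2 • A + γ ^ 2 • Cm) * (γ • B + A)⁻¹)) 0 γ < 0 :=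
    (hslope.eventually_lt_const hDneg).filter_mono
      (nhdsWithin_mono 0 (fun x hx => ne_of_gt hx))
  rw [eventually_nhdsWithin_iff] at hev
  obtain ⟨ε, hε, hball⟩ := Metric.eventually_nhds_iff.mp hev
  refine ⟨ε, hε, fun γ hγ0 hγε => ?_⟩
  have hd : dist γ 0 < ε := by
    rw [Real.dist_eq, sub_zero, abs_of_pos hγ0]; exact hγε
  have hs := hball hd hγ0
  rw [slope_def_field] at hs
  rw [sub_zero] at hs
  have hnum : Matrix.trace ((γ • B + A)⁻¹ * (σ ^ 2 • A + γ ^ 2 • Cm) * (γ • B + A)⁻¹)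
      - Matrix.trace (((0:ℝ) • B + A)⁻¹ * (σ ^ 2 • A + (0:ℝ) ^ 2 • Cm) * ((0:ℝ) • B + A)⁻¹) < 0 := by
    rcases div_neg_iff.mp hs with ⟨h1, h2⟩ | ⟨h1, h2⟩
    · exact absurd hγ0 (not_lt.mpr h2.le)
    · exact h1
  rw [hf0] at hnum
  linarith
end
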